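/- (key identity in the proof of Lemma 3.2) If (A,b) is symplectic with b_i ≠ 0 for all i, then for all real n×n matrices F_1,…,F_s, det(I_{sn} − h·N) = det(I_{sn} + h·M(Aᵀ;F)), where N is the (s·n)×(s·n) block matrix whose (i,j) block is (a_{ij} − b_j)·exp((c_i−c_j)·h·K)·F_j. -/

import Mathlib

/-!
With `D = diag(b_1 I_n, …, b_s I_n)`, symplecticity rewritten as
`a_ij - b_j = -(b_j / b_i) a_ji` says exactly that `N = -D⁻¹ M(Aᵀ;F) D`; the exponential factors
agree blockwise. Hence `1 - hN = D⁻¹ (1 + h M(Aᵀ;F)) D` and the determinants coincide.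
-/

open Matrix

/-- The block matrix `M(A;F)` whose `(i,j)` block is `a_{ij}·exp((c_i−c_j)·h·K)·F_j`. -/
noncomputable def Mblk {n s : ℕ} (h : ℝ) (K : Matrix (Fin n) (Fin n) ℝ) (c : Fin s → ℝ)
    (A : Matrix (Fin s) (Fin s) ℝ) (F : Fin s → Matrix (Fin n) (Fin n) ℝ) :
    Matrix (Fin s × Fin n) (Fin s × Fin n) ℝ :=
  fun p q => A p.1 q.1 * (NormedSpace.exp (((c p.1 - c q.1) * h) • K) * F q.1) p.2 q.2

/-- A Runge–Kutta pair `(A, b)` is symplectic. -/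
def IsSymplecticRK {s : ℕ} (A : Matrix (Fin s) (Fin s) ℝ) (b : Fin s → ℝ) : Prop :=
  ∀ i j, b i * A i j + b j * A j i - b i * b j = 0

theorem Matrix.det_one_sub_eq_det_one_add_of_apply_eq_neg_div_mul {ι K : Type*} [Fintype ι]
    [DecidableEq ι] [Field K] (β : ι → K) (hβ : ∀ i, β i ≠ 0) (M N : Matrix ι ι K)
    (hN : ∀ p q, N p q = -(β q / β p * M p q)) :
    (1 - N).det = (1 + M).det := by
  have hconj : 1 - N = diagonal (fun i => (β i)⁻¹) * (1 + M) * diagonal β := by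
    ext p q
    rw [mul_diagonal, diagonal_mul, sub_apply, add_apply, hN, one_apply]
    split_ifs with hpq
    · subst hpq; field_simp [hβ p]; ring
    · field_simp [hβ p]; ring
  have hβprod : ∏ i, β i ≠ 0 := Finset.prod_ne_zero_iff.mpr fun i _ => hβ i
  rw [hconj, det_mul, det_mul, det_diagonal, det_diagonal, Finset.prod_inv_distrib]
  field_simp

theorem IsSymplecticRK.sub_eq {s : ℕ} {A : Matrix (Fin s) (Fin s) ℝ} {b : Fin s → ℝ}
    (hsymp : IsSymplecticRK A b) {i : Fin s} (hi : b i ≠ 0) (j : Fin s) :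
    A i j - b j = -(b j / b i * A j i) := by
  field_simp
  linear_combination hsymp i j

theorem stmt_3 (n s : ℕ) (h : ℝ) (K : Matrix (Fin n) (Fin n) ℝ) (c : Fin s → ℝ)
    (A : Matrix (Fin s) (Fin s) ℝ) (b : Fin s → ℝ)
    (hsymp : IsSymplecticRK A b) (hb : ∀ i, b i ≠ 0)
    (F : Fin s → Matrix (Fin n) (Fin n) ℝ)
    (N : Matrix (Fin s × Fin n) (Fin s × Fin n) ℝ)
    (hN : ∀ p q, N p q =
      (A p.1 q.1 - b q.1) * (NormedSpace.exp (((c p.1 - c q.1) * h) • K) * F q.1) p.2 q.2) :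
    ((1 : Matrix (Fin s × Fin n) (Fin s × Fin n) ℝ) - h • N).det =
      ((1 : Matrix (Fin s × Fin n) (Fin s × Fin n) ℝ) + h • Mblk h K c Aᵀ F).det := by
  refine det_one_sub_eq_det_one_add_of_apply_eq_neg_div_mul (fun p => b p.1) (fun p => hb p.1)
    _ _ fun p q => ?_
  simp only [Matrix.smul_apply, smul_eq_mul, hN, Mblk, transpose_apply, hsymp.sub_eq (hb p.1)]
  ring
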